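/- Let a, b, c be the vertices of a triangle in ℝ³ and p, q points strictly on opposite sides of the plane through a, b, c. Then the union of the two tetrahedra conv{a,b,c,p} ∪ conv{a,b,c,q} equals the union of the three tetrahedra conv{a,b,p,q} ∪ conv{b,c,p,q} ∪ conv{c,a,p,q}, provided the segment pq meets the interior of triangle abc. -/

import Mathlib

/-!
Work in barycentric coordinates `x_i` with respect to the affine basis `a, b, c, p`, and let `λ` be
the coordinates of `q`. Replacing vertex `k` by `q` (where `λ_k ≠ 0`) gives the simplex of points
`x` such that `t = x_k / λ_k` satisfies `0 ≤ t` and `t • λ ≤ x`. Both sides of the identity are the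
set of points admitting some `t ≥ 0` with `t • λ ≤ x`: the largest such `t` is `x_k / λ_k` for a
`k` with `λ_k > 0`, and the smallest one is either `0` (the simplex `abcp` itself) or `x_k / λ_k`
for a `k` with `λ_k < 0`. The point where `pq` crosses the relative interior of `abc` shows that
`λ_p < 0` while `λ_a, λ_b, λ_c > 0`.
-/

open Set Function Filter Topology

section DivSmulLe

variable {ι : Type*} [Fintype ι] {l x : ι → ℝ} {s : ℝ}

theorem exists_pos_div_smul_le (hl : ∃ i, 0 < l i) (hs : 0 ≤ s) (hsx : s • l ≤ x) :
    ∃ k, 0 < l k ∧ 0 ≤ x k / l k ∧ (x k / l k) • l ≤ x := by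
  classical
  obtain ⟨i₀, hi₀⟩ := hl
  obtain ⟨k, hk, hmin⟩ := Finset.exists_min_image (Finset.univ.filter (0 < l ·))
    (fun i => x i / l i) ⟨i₀, by simpa using hi₀⟩
  rw [Finset.mem_filter] at hk
  have hsk : s ≤ x k / l k := (le_div_iff₀ hk.2).2 (hsx k)
  refine ⟨k, hk.2, hs.trans hsk, fun i => ?_⟩
  rcases lt_or_ge 0 (l i) with hi | hi
  · calc x k / l k * l i ≤ x i / l i * l i :=
          mul_le_mul_of_nonneg_right (hmin i (by simpa using hi)) hi.le
      _ = x i := div_mul_cancel₀ _ hi.ne'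
  · calc x k / l k * l i ≤ s * l i := mul_le_mul_of_nonpos_right hsk hi
      _ ≤ x i := hsx i

theorem exists_neg_div_smul_le (hs : 0 ≤ s) (hsx : s • l ≤ x) (hx : ¬ 0 ≤ x) :
    ∃ k, l k < 0 ∧ 0 ≤ x k / l k ∧ (x k / l k) • l ≤ x := by
  classical
  obtain ⟨i₀, hxi₀⟩ : ∃ i, x i < 0 := by simpa [Pi.le_def] using hx
  have hli₀ : l i₀ < 0 := by
    by_contra! h
    linarith [hsx i₀, mul_nonneg hs h, show (s • l) i₀ = s * l i₀ from rfl]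
  obtain ⟨k, hk, hmax⟩ := Finset.exists_max_image (Finset.univ.filter (l · < 0))
    (fun i => x i / l i) ⟨i₀, by simpa using hli₀⟩
  rw [Finset.mem_filter] at hk
  have hks : x k / l k ≤ s := (div_le_iff_of_neg hk.2).2 (hsx k)
  refine ⟨k, hk.2, (div_pos_of_neg_of_neg hxi₀ hli₀).le.trans
    (hmax i₀ (by simpa using hli₀)), fun i => ?_⟩
  rcases lt_or_ge (l i) 0 with hi | hi
  · calc x k / l k * l i ≤ x i / l i * l i :=
          mul_le_mul_of_nonpos_right (hmax i (by simpa using hi)) hi.le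
      _ = x i := div_mul_cancel₀ _ hi.ne
  · calc x k / l k * l i ≤ s * l i := mul_le_mul_of_nonneg_right hks hi
      _ ≤ x i := hsx i

end DivSmulLe

theorem Fintype.sum_smul_update {ι R M : Type*} [Fintype ι] [DecidableEq ι] [Ring R]
    [AddCommGroup M] [Module R M] (w : ι → R) (v : ι → M) (k : ι) (q : M) :
    ∑ j, w j • update v k q j = ∑ j, w j • v j + w k • (q - v k) := by
  have h : (fun j => w j • update v k q j) = update (fun j => w j • v j) k (w k • q) := by
    ext j
    rcases eq_or_ne j k with rfl | hj <;> simp [*]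
  rw [h, Finset.sum_update_of_mem (Finset.mem_univ k),
    ← Finset.add_sum_erase _ _ (Finset.mem_univ k)]
  simp only [Finset.sdiff_singleton_eq_erase, smul_sub]
  abel

namespace AffineBasis

section Module

variable {ι E : Type*} [AddCommGroup E] [Module ℝ E]

theorem mem_convexHull_iff_coords_nonneg (Φ : AffineBasis ι ℝ E) {x : E} :
    x ∈ convexHull ℝ (range Φ) ↔ 0 ≤ Φ.coords x := by
  rw [Φ.convexHull_eq_nonneg_coord, mem_ofPred_eq, Pi.le_def]
  rfl

theorem coord_eq_zero_of_mem_convexHull (Φ : AffineBasis ι ℝ E) {i : ι} {s : Set E}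
    (hs : s ⊆ Φ '' {i}ᶜ) {r : E} (hr : r ∈ convexHull ℝ s) : Φ.coord i r = 0 := by
  refine convexHull_min (t := Φ.coord i ⁻¹' {0}) (fun y hy => ?_)
    ((convex_singleton 0).affine_preimage _) hr
  obtain ⟨j, hj, rfl⟩ := hs hy
  exact Φ.coord_apply_ne (Ne.symm hj)

theorem coord_neg_of_mem_openSegment (Φ : AffineBasis ι ℝ E) {k : ι} {q r : E}
    (hr : r ∈ openSegment ℝ (Φ k) q) (hrk : Φ.coord k r = 0) : Φ.coord k q < 0 := by
  obtain ⟨a, b, ha, hb, hab, rfl⟩ := hr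
  rw [Convex.combo_affine_apply hab, coord_apply_eq] at hrk
  simp only [smul_eq_mul] at hrk
  nlinarith

theorem coord_pos_of_mem_openSegment (Φ : AffineBasis ι ℝ E) {k i : ι} {q r : E}
    (hr : r ∈ openSegment ℝ (Φ k) q) (hik : i ≠ k) (hri : 0 < Φ.coord i r) :
    0 < Φ.coord i q := by
  obtain ⟨a, b, ha, hb, hab, rfl⟩ := hr
  rw [Convex.combo_affine_apply hab, coord_apply_ne _ hik] at hri
  simp only [smul_eq_mul, mul_zero, zero_add] at hri
  exact pos_of_mul_pos_right hri hb.le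

variable [Fintype ι]

theorem exists_coord_pos (Φ : AffineBasis ι ℝ E) (q : E) : ∃ i, 0 < Φ.coord i q := by
  by_contra! h
  linarith [Φ.sum_coord_apply_eq_one q, Finset.sum_nonpos fun i (_ : i ∈ Finset.univ) => h i]

variable [DecidableEq ι]

theorem mem_convexHull_update_iff (Φ : AffineBasis ι ℝ E) {k : ι} {q : E}
    (hq : Φ.coord k q ≠ 0) {x : E} :
    x ∈ convexHull ℝ (range (update Φ k q)) ↔
      0 ≤ Φ.coord k x / Φ.coord k q ∧
        (Φ.coord k x / Φ.coord k q) • Φ.coords q ≤ Φ.coords x := by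
  set t : E → ℝ := fun y => Φ.coord k y / Φ.coord k q
  constructor
  · refine fun hx => convexHull_min (t := {y | 0 ≤ t y ∧ t y • Φ.coords q ≤ Φ.coords y})
      ?_ ?_ hx
    · rintro _ ⟨j, rfl⟩
      rcases eq_or_ne j k with rfl | hj
      · simp [t, hq]
      · have hΦj := Φ.mem_convexHull_iff_coords_nonneg.1
          (subset_convexHull ℝ _ (mem_range_self j))
        simpa [t, update_of_ne hj, Φ.coord_apply_ne hj.symm] using hΦj
    · rintro y ⟨hy0, hy⟩ z ⟨hz0, hz⟩ a b ha hb hab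
      have htc : t (a • y + b • z) = a * t y + b * t z := by
        simp only [t, Convex.combo_affine_apply hab, smul_eq_mul]
        ring
      refine ⟨htc ▸ by positivity, ?_⟩
      rw [htc, Convex.combo_affine_apply hab, add_smul, mul_smul, mul_smul]
      exact add_le_add (smul_le_smul_of_nonneg_left hy ha) (smul_le_smul_of_nonneg_left hz hb)
  · rintro ⟨ht0, htx⟩
    have htk : Φ.coord k x - t x * Φ.coord k q = 0 := by simp [t, hq]
    refine mem_convexHull_of_exists_fintype
      (fun j => Φ.coord j x - t x * Φ.coord j q + Pi.single (M := fun _ => ℝ) k (t x) j)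
      (update Φ k q) (fun j => ?_) ?_ (fun j => mem_range_self j) ?_
    · rcases eq_or_ne j k with rfl | hj
      · simpa [htk] using ht0
      · simpa [hj] using htx j
    · simp [Finset.sum_add_distrib, Finset.sum_sub_distrib, ← Finset.mul_sum]
    · rw [Fintype.sum_smul_update]
      simp [htk, add_smul, sub_smul, Finset.sum_add_distrib, Finset.sum_sub_distrib, mul_smul,
        ← Finset.smul_sum]
      module

/-- The bistellar flip on the `Φ i` together with `q`. -/
theorem convexHull_union_iUnion_coord_neg_eq_iUnion_coord_pos (Φ : AffineBasis ι ℝ E) (q : E) :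
    convexHull ℝ (range Φ) ∪ ⋃ (k) (_ : Φ.coord k q < 0), convexHull ℝ (range (update Φ k q)) =
      ⋃ (k) (_ : 0 < Φ.coord k q), convexHull ℝ (range (update Φ k q)) := by
  ext x
  simp only [mem_union, mem_iUnion, exists_prop]
  constructor
  · rintro (hx | ⟨k, hk, hx⟩)
    · obtain ⟨i, hi, hx'⟩ := exists_pos_div_smul_le (Φ.exists_coord_pos q) le_rfl
        (by simpa using Φ.mem_convexHull_iff_coords_nonneg.1 hx)
      exact ⟨i, hi, (Φ.mem_convexHull_update_iff hi.ne').2 hx'⟩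
    · obtain ⟨ht0, htx⟩ := (Φ.mem_convexHull_update_iff hk.ne).1 hx
      obtain ⟨i, hi, hx'⟩ := exists_pos_div_smul_le (Φ.exists_coord_pos q) ht0 htx
      exact ⟨i, hi, (Φ.mem_convexHull_update_iff hi.ne').2 hx'⟩
  · rintro ⟨k, hk, hx⟩
    obtain ⟨ht0, htx⟩ := (Φ.mem_convexHull_update_iff hk.ne').1 hx
    by_cases hx0 : 0 ≤ Φ.coords x
    · exact Or.inl (Φ.mem_convexHull_iff_coords_nonneg.2 hx0)
    · obtain ⟨i, hi, hx'⟩ := exists_neg_div_smul_le ht0 htx hx0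
      exact Or.inr ⟨i, hi, (Φ.mem_convexHull_update_iff hi.ne).2 hx'⟩

end Module

theorem convexHull_union_eq_of_coord_signs {E : Type*} [AddCommGroup E] [Module ℝ E]
    {a b c p q : E} (Φ : AffineBasis (Fin 4) ℝ E) (hΦ : ⇑Φ = ![a, b, c, p])
    (hq3 : Φ.coord 3 q < 0) (hq : ∀ i ≠ 3, 0 < Φ.coord i q) :
    convexHull ℝ {a, b, c, p} ∪ convexHull ℝ {a, b, c, q} =
      convexHull ℝ {a, b, p, q} ∪ convexHull ℝ {b, c, p, q} ∪ convexHull ℝ {c, a, p, q} := by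
  have hΦr : range Φ = {a, b, c, p} := by ext; simp [hΦ]; tauto
  have h0 : range (update Φ 0 q) = {b, c, p, q} := by
    ext; simp [hΦ, Fin.exists_fin_succ, update_apply]; tauto
  have h1 : range (update Φ 1 q) = {c, a, p, q} := by
    ext; simp [hΦ, Fin.exists_fin_succ, update_apply]; tauto
  have h2 : range (update Φ 2 q) = {a, b, p, q} := by
    ext; simp [hΦ, Fin.exists_fin_succ, update_apply]; tauto
  have h3 : range (update Φ 3 q) = {a, b, c, q} := by
    ext; simp [hΦ, Fin.exists_fin_succ, update_apply]; tauto
  have hq0 := hq 0 (by decide)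
  have hq1 := hq 1 (by decide)
  have hq2 := hq 2 (by decide)
  have hneg : ∀ k, Φ.coord k q < 0 ↔ k = 3 := by
    intro k; fin_cases k <;> simp [hq3, hq0.not_gt, hq1.not_gt, hq2.not_gt]
  have hpos : ∀ k, 0 < Φ.coord k q ↔ k = 0 ∨ k = 1 ∨ k = 2 := by
    intro k; fin_cases k <;> simp [hq0, hq1, hq2, hq3.not_gt]
  have hflip := Φ.convexHull_union_iUnion_coord_neg_eq_iUnion_coord_pos q
  simp only [hneg, hpos, iUnion_or, iUnion_union_distrib, iUnion_iUnion_eq_left, hΦr, h0, h1, h2,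
    h3] at hflip
  rw [hflip]
  ac_rfl

end AffineBasis

section IntrinsicInterior

variable {E : Type*} [NormedAddCommGroup E] [NormedSpace ℝ E] {C : Set E} {z r : E}

theorem eventually_lineMap_mem_of_mem_intrinsicInterior (hz : z ∈ affineSpan ℝ C)
    (hr : r ∈ intrinsicInterior ℝ C) : ∀ᶠ θ in 𝓝 (1 : ℝ), AffineMap.lineMap z r θ ∈ C := by
  obtain ⟨y, hy, rfl⟩ := mem_intrinsicInterior.1 hr
  let f : ℝ → affineSpan ℝ C := fun θ => ⟨AffineMap.lineMap z y θ, AffineMap.lineMap_mem θ hz y.2⟩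
  have hf : Continuous f := AffineMap.lineMap_continuous.subtype_mk _
  have hf1 : f 1 = y := Subtype.ext (AffineMap.lineMap_apply_one z y)
  have hmem : f ⁻¹' interior (Subtype.val ⁻¹' C) ∈ 𝓝 (1 : ℝ) :=
    hf.continuousAt.preimage_mem_nhds (hf1 ▸ isOpen_interior.mem_nhds hy)
  exact mem_of_superset hmem fun θ hθ => interior_subset (s := Subtype.val ⁻¹' C) hθ

theorem AffineMap.pos_of_mem_intrinsicInterior (g : E →ᵃ[ℝ] ℝ) (hg : ∀ y ∈ C, 0 ≤ g y)
    (hz : z ∈ C) (hgz : 0 < g z) (hr : r ∈ intrinsicInterior ℝ C) : 0 < g r := by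
  obtain ⟨θ, hθC, hθ⟩ := (((eventually_lineMap_mem_of_mem_intrinsicInterior
    (subset_affineSpan ℝ C hz) hr).filter_mono nhdsWithin_le_nhds).and
    (self_mem_nhdsWithin : Ioi (1 : ℝ) ∈ 𝓝[>] 1)).exists
  have h := hg _ hθC
  rw [AffineMap.apply_lineMap, AffineMap.lineMap_apply_ring] at h
  by_contra! hgr
  nlinarith [hθ]

theorem AffineBasis.coord_pos_of_mem_intrinsicInterior {ι : Type*} (Φ : AffineBasis ι ℝ E)
    {s : Set E} (hs : s ⊆ range Φ) {i : ι} (hi : Φ i ∈ s)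
    (hr : r ∈ intrinsicInterior ℝ (convexHull ℝ s)) : 0 < Φ.coord i r :=
  (Φ.coord i).pos_of_mem_intrinsicInterior
    (fun _ hy => Φ.mem_convexHull_iff_coords_nonneg.1 (convexHull_mono hs hy) i)
    (subset_convexHull ℝ s hi) (by simp) hr

end IntrinsicInterior

theorem two_three_pachner_union_general (a b c p q : EuclideanSpace ℝ (Fin 3))
    (h₁ : AffineIndependent ℝ ![a, b, c, p])
    (h₃ : (openSegment ℝ p q ∩
      intrinsicInterior ℝ (convexHull ℝ ({a, b, c} : Set (EuclideanSpace ℝ (Fin 3))))).Nonempty) :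
    convexHull ℝ ({a, b, c, p} : Set (EuclideanSpace ℝ (Fin 3))) ∪
      convexHull ℝ ({a, b, c, q} : Set (EuclideanSpace ℝ (Fin 3))) =
    convexHull ℝ ({a, b, p, q} : Set (EuclideanSpace ℝ (Fin 3))) ∪
      convexHull ℝ ({b, c, p, q} : Set (EuclideanSpace ℝ (Fin 3))) ∪
      convexHull ℝ ({c, a, p, q} : Set (EuclideanSpace ℝ (Fin 3))) := by
  let Φ : AffineBasis (Fin 4) ℝ (EuclideanSpace ℝ (Fin 3)) :=
    ⟨_, h₁, h₁.affineSpan_eq_top_iff_card_eq_finrank_add_one.2 (by simp)⟩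
  obtain ⟨r, hpr, hr⟩ := h₃
  have hq3 : Φ.coord 3 q < 0 := by
    refine Φ.coord_neg_of_mem_openSegment hpr
      (Φ.coord_eq_zero_of_mem_convexHull ?_ (intrinsicInterior_subset hr))
    rintro _ (rfl | rfl | rfl)
    exacts [⟨0, by decide, rfl⟩, ⟨1, by decide, rfl⟩, ⟨2, by decide, rfl⟩]
  have hq : ∀ i ≠ 3, 0 < Φ.coord i q := by
    refine fun i hi => Φ.coord_pos_of_mem_openSegment hpr hi
      (Φ.coord_pos_of_mem_intrinsicInterior ?_ ?_ hr)
    · rintro _ (rfl | rfl | rfl)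
      exacts [⟨0, rfl⟩, ⟨1, rfl⟩, ⟨2, rfl⟩]
    · fin_cases i
      exacts [Or.inl rfl, Or.inr (Or.inl rfl), Or.inr (Or.inr rfl), absurd rfl hi]
  exact Φ.convexHull_union_eq_of_coord_signs rfl hq3 hq

/-- Geometric content of the 2→3 Pachner move: if a, b, c, p are affinely
independent in ℝ³, q lies strictly on the opposite side of the plane through
a, b, c from p, and the open segment pq meets the (relative) interior of the
triangle abc, then the union of the two tetrahedra conv{a,b,c,p} ∪
conv{a,b,c,q} equals the union of the three tetrahedra conv{a,b,p,q} ∪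
conv{b,c,p,q} ∪ conv{c,a,p,q}. -/
theorem two_three_pachner_union (a b c p q : EuclideanSpace ℝ (Fin 3))
    (h₁ : AffineIndependent ℝ ![a, b, c, p])
    (h₂ : (affineSpan ℝ ({a, b, c} : Set (EuclideanSpace ℝ (Fin 3)))).SOppSide p q)
    (h₃ : (openSegment ℝ p q ∩
      intrinsicInterior ℝ (convexHull ℝ ({a, b, c} : Set (EuclideanSpace ℝ (Fin 3))))).Nonempty) :
    convexHull ℝ ({a, b, c, p} : Set (EuclideanSpace ℝ (Fin 3))) ∪
      convexHull ℝ ({a, b, c, q} : Set (EuclideanSpace ℝ (Fin 3))) =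
    convexHull ℝ ({a, b, p, q} : Set (EuclideanSpace ℝ (Fin 3))) ∪
      convexHull ℝ ({b, c, p, q} : Set (EuclideanSpace ℝ (Fin 3))) ∪
      convexHull ℝ ({c, a, p, q} : Set (EuclideanSpace ℝ (Fin 3))) :=
  two_three_pachner_union_general a b c p q h₁ h₃
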